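/- Let u_T : ℝⁿ → ℝ be Lipschitz with I_T(u_T) nonempty, and let u0 ∈ I_T(u_T). Then for any x0 ∈ ℝⁿ, the following are equivalent: (1) x0 ∈ X_T(u_T); (2) there exist b ∈ ℝⁿ and c ∈ ℝ such that u0(x0) = −⟨A⁻¹x0, x0⟩/(2T) + ⟨b, x0⟩ + c and u0(x) > −⟨A⁻¹x, x⟩/(2T) + ⟨b, x⟩ + c for all x ∈ ℝⁿ with x ≠ x0. -/

import Mathlib

open scoped RealInnerProductSpace
open Filter

noncomputable section

/-- `n`-dimensional Euclidean space. -/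
abbrev Euc (n : ℕ) := EuclideanSpace ℝ (Fin n)

/-- A real-valued function on `ℝⁿ` is Lipschitz (with some constant). -/
def IsLip {n : ℕ} (f : Euc n → ℝ) : Prop := ∃ K : NNReal, LipschitzWith K f

/-- The quadratic form `q ↦ ⟨M q, q⟩` associated to a matrix `M`. -/
def quadA {n : ℕ} (M : Matrix (Fin n) (Fin n) ℝ) (q : Euc n) : ℝ :=
  ⟪(Matrix.toEuclideanLin M) q, q⟫

/-- The forward Hopf–Lax operator for the quadratic Hamiltonian `H(p) = ⟨A p, p⟩/2`:
`(S_T^+ g)(x) = inf_y [g(y) + ⟨A⁻¹(x-y), x-y⟩/(2T)]`. -/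
def SplusQ {n : ℕ} (T : ℝ) (A : Matrix (Fin n) (Fin n) ℝ) (g : Euc n → ℝ) (x : Euc n) : ℝ :=
  ⨅ y : Euc n, (g y + quadA A⁻¹ (x - y) / (2 * T))

/-- The backward operator for the quadratic Hamiltonian:
`(S_T^- g)(x) = sup_y [g(y) - ⟨A⁻¹(y-x), y-x⟩/(2T)]`. -/
def SminusQ {n : ℕ} (T : ℝ) (A : Matrix (Fin n) (Fin n) ℝ) (g : Euc n → ℝ) (x : Euc n) : ℝ :=
  ⨆ y : Euc n, (g y - quadA A⁻¹ (y - x) / (2 * T))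

/-- The set `X_T(u_T) = { z - T·A∇u_T(z) : u_T differentiable at z }` for the quadratic
Hamiltonian `H(p) = ⟨A p, p⟩/2`. -/
def XTQ {n : ℕ} (T : ℝ) (A : Matrix (Fin n) (Fin n) ℝ) (uT : Euc n → ℝ) : Set (Euc n) :=
  {x | ∃ z : Euc n, DifferentiableAt ℝ uT z ∧
    x = z - T • (Matrix.toEuclideanLin A) (gradient uT z)}

/-!
Write `c_z(y) = u0(y) + ⟨A⁻¹(z - y), z - y⟩/(2T)`, so that `u_T(z) = min_y c_z(y)`, the minimum
being attained within a fixed distance of `z` because the kernel grows quadratically while `u0` is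
Lipschitz. Expanding the square, `u0 - c_z` is, up to a constant, the paraboloid
`-⟨A⁻¹x, x⟩/(2T) + ⟨A⁻¹z/T, x⟩`; so a paraboloid with parameter `b` touches `u0` strictly from
below exactly at `x0` iff `x0` is the unique minimizer of `c_z` for `z = T A b`.

If `y` minimizes `c_z`, then `u_T ≤ c_·(y)` with equality at `z`, so wherever `u_T` is
differentiable, `∇u_T(z) = A⁻¹(z - y)/T`, i.e. `y = z - T A ∇u_T(z)`: the minimizer is unique and
is the point of `X_T(u_T)`. Conversely, if `x0` is the unique minimizer of `c_z`, minimizers of the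
nearby `c_x` converge to `x0` by compactness, and this squeezes the first-order remainder of `u_T`
at `z` between two `o(|x - z|)` terms.
-/

open Filter Topology Asymptotics

theorem MapClusterPt.prodMk_of_tendsto {α X Y : Type*} [TopologicalSpace X] [TopologicalSpace Y]
    {l : Filter α} {f : α → X} {g : α → Y} {a : X} {b : Y}
    (hg : MapClusterPt b l g) (hf : Tendsto f l (𝓝 a)) :
    MapClusterPt (a, b) l (fun x => (f x, g x)) := by
  rw [((𝓝 a).basis_sets.prod_nhds (𝓝 b).basis_sets).mapClusterPt_iff_frequently]
  rintro ⟨s, t⟩ ⟨hs, ht⟩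
  exact ((mapClusterPt_iff_frequently.1 hg t ht).and_eventually (hf hs)).mono
    fun x hx => ⟨hx.2, hx.1⟩

theorem tendsto_nhds_of_isMin_of_unique {X Y : Type*} [TopologicalSpace X] [TopologicalSpace Y]
    {F : X → Y → ℝ} (hF : Continuous (Function.uncurry F)) {y : X → Y}
    (hy : ∀ x w, F x (y x) ≤ F x w) {z : X} {b : Y} {K : Set Y} (hK : IsCompact K)
    (hyK : ∀ᶠ x in 𝓝 z, y x ∈ K) (hb : ∀ c, (∀ w, F z c ≤ F z w) → c = b) :
    Tendsto y (𝓝 z) (𝓝 b) := by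
  refine hK.tendsto_nhds_of_unique_mapClusterPt hyK fun c _ hc => hb c fun w => ?_
  have hclosed : IsClosed {p : X × Y | F p.1 p.2 ≤ F p.1 w} :=
    isClosed_le hF (hF.comp (continuous_fst.prodMk continuous_const))
  exact hclosed.mem_of_mapClusterPt (hc.prodMk_of_tendsto tendsto_id)
    (Eventually.of_forall fun x => show F x (y x) ≤ F x w from hy x w)

theorem HasFDerivAt.eq_of_eventuallyLE_of_eq {E : Type*} [NormedAddCommGroup E] [NormedSpace ℝ E]
    {f g : E → ℝ} {f' g' : E →L[ℝ] ℝ} {z : E} (hf : HasFDerivAt f f' z) (hg : HasFDerivAt g g' z)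
    (hle : f ≤ᶠ[𝓝 z] g) (heq : f z = g z) : f' = g' := by
  have hmin : IsLocalMin (g - f) z :=
    hle.mono fun x hx => by simpa [heq] using hx
  exact (sub_eq_zero.1 (hmin.hasFDerivAt_eq_zero (hg.sub hf))).symm

theorem Asymptotics.IsLittleO.of_le_of_le {α F : Type*} [Norm F] {l : Filter α}
    {f lo up : α → ℝ} {g : α → F} (hlo : lo =o[l] g) (hup : up =o[l] g)
    (h₁ : ∀ᶠ x in l, lo x ≤ f x) (h₂ : ∀ᶠ x in l, f x ≤ up x) : f =o[l] g := by
  refine IsBigO.trans_isLittleO (g := fun x => |lo x| + |up x|) ?_ (hlo.norm_left.add hup.norm_left)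
  refine IsBigO.of_bound 1 ?_
  filter_upwards [h₁, h₂] with x hx₁ hx₂
  simp only [Real.norm_eq_abs, one_mul]
  rw [abs_of_nonneg (by positivity : 0 ≤ |lo x| + |up x|)]
  exact abs_le.2 ⟨by linarith [neg_abs_le (lo x), abs_nonneg (up x)],
    by linarith [le_abs_self (up x), abs_nonneg (lo x)]⟩

theorem Asymptotics.isLittleO_inner_of_tendsto_zero {α F : Type*} [NormedAddCommGroup F]
    [InnerProductSpace ℝ F] {l : Filter α} {f h : α → F} (hf : Tendsto f l (𝓝 0)) :
    (fun x => ⟪f x, h x⟫) =o[l] h := by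
  rw [isLittleO_iff]
  intro c hc
  filter_upwards [(tendsto_norm_zero.comp hf).eventually (ge_mem_nhds hc)] with x hx
  calc ‖⟪f x, h x⟫‖ ≤ ‖f x‖ * ‖h x‖ := norm_inner_le_norm _ _
    _ ≤ c * ‖h x‖ := by gcongr; exact hx

section QuadraticForm

open Matrix

variable {n : ℕ} {M : Matrix (Fin n) (Fin n) ℝ}

theorem toEuclideanLin_apply_inv_apply (hM : IsUnit M) (v : Euc n) :
    toEuclideanLin M (toEuclideanLin M⁻¹ v) = v := by
  rw [← LinearMap.comp_apply, ← toLpLin_mul_same,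
    mul_nonsing_inv _ (isUnit_iff_isUnit_det M |>.1 hM), toLpLin_one, LinearMap.id_apply]

theorem toEuclideanLin_inv_apply_apply (hM : IsUnit M) (v : Euc n) :
    toEuclideanLin M⁻¹ (toEuclideanLin M v) = v := by
  rw [← LinearMap.comp_apply, ← toLpLin_mul_same,
    nonsing_inv_mul _ (isUnit_iff_isUnit_det M |>.1 hM), toLpLin_one, LinearMap.id_apply]

theorem continuous_quadA (M : Matrix (Fin n) (Fin n) ℝ) : Continuous (quadA M) :=
  (toEuclideanLin M).continuous_of_finiteDimensional.inner continuous_id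

theorem quadA_smul (M : Matrix (Fin n) (Fin n) ℝ) (c : ℝ) (x : Euc n) :
    quadA M (c • x) = c ^ 2 * quadA M x := by
  rw [quadA, map_smul, real_inner_smul_left, real_inner_smul_right, quadA]; ring

theorem quadA_add (hM : M.IsHermitian) (x y : Euc n) :
    quadA M (x + y) = quadA M x + 2 * ⟪toEuclideanLin M x, y⟫ + quadA M y := by
  have hsymm : ⟪toEuclideanLin M y, x⟫ = ⟪toEuclideanLin M x, y⟫ := by
    rw [isSymmetric_toEuclideanLin_iff.2 hM y x, real_inner_comm]
  simp only [quadA, map_add, inner_add_left, inner_add_right, hsymm]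
  ring

theorem quadA_pos (hM : M.PosDef) {x : Euc n} (hx : x ≠ 0) : 0 < quadA M x := by
  have h := hM.dotProduct_mulVec_pos (x := WithLp.ofLp x) (by simpa using hx)
  simpa [quadA, toLpLin_apply, EuclideanSpace.inner_eq_star_dotProduct, dotProduct_comm] using h

theorem quadA_nonneg (hM : M.PosDef) (x : Euc n) : 0 ≤ quadA M x := by
  rcases eq_or_ne x 0 with rfl | hx
  · simp [quadA]
  · exact (quadA_pos hM hx).le

theorem exists_mul_norm_sq_le_quadA (hM : M.PosDef) :
    ∃ m > 0, ∀ x : Euc n, m * ‖x‖ ^ 2 ≤ quadA M x := by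
  rcases subsingleton_or_nontrivial (Euc n) with hE | hE
  · exact ⟨1, one_pos, fun x => by simp [Subsingleton.elim x 0, quadA]⟩
  obtain ⟨u, hu, hmin⟩ := (isCompact_sphere (0 : Euc n) 1).exists_isMinOn
    (NormedSpace.sphere_nonempty.2 zero_le_one) (continuous_quadA M).continuousOn
  refine ⟨quadA M u, quadA_pos hM (ne_zero_of_mem_unit_sphere ⟨u, hu⟩), fun x => ?_⟩
  rcases eq_or_ne x 0 with rfl | hx
  · simp [quadA]
  have hxu : quadA M u ≤ quadA M (‖x‖⁻¹ • x) :=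
    hmin (by simp [norm_smul, norm_ne_zero_iff.2 hx])
  rwa [quadA_smul, inv_pow, ← div_eq_inv_mul, le_div_iff₀ (by positivity)] at hxu

end QuadraticForm

section HopfLax

open Matrix

variable {n : ℕ} {T : ℝ} {A : Matrix (Fin n) (Fin n) ℝ} {g : Euc n → ℝ} {K : NNReal}

-- `SplusQ T A g x` is definitionally `⨅ y, hopfLaxCost T A g x y`.
def hopfLaxCost (T : ℝ) (A : Matrix (Fin n) (Fin n) ℝ) (g : Euc n → ℝ) (x y : Euc n) : ℝ :=
  g y + quadA A⁻¹ (x - y) / (2 * T)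

theorem hopfLaxCost_self (x : Euc n) : hopfLaxCost T A g x x = g x := by
  simp [hopfLaxCost, quadA]

theorem continuous_hopfLaxCost (hg : Continuous g) :
    Continuous (Function.uncurry (hopfLaxCost T A g)) :=
  (hg.comp continuous_snd).add
    (((continuous_quadA _).comp (continuous_fst.sub continuous_snd)).div_const _)

theorem hopfLaxCost_eq_add (hA : A.IsHermitian) (x z y : Euc n) :
    hopfLaxCost T A g x y = hopfLaxCost T A g z y + ⟪T⁻¹ • toEuclideanLin A⁻¹ (z - y), x - z⟫
      + quadA A⁻¹ (x - z) / (2 * T) := by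
  have hxy : x - y = (z - y) + (x - z) := by abel
  rw [hopfLaxCost, hopfLaxCost, hxy, quadA_add hA.inv, real_inner_smul_left]
  ring

theorem hopfLaxCost_eq_sub_paraboloid (hA : A.IsHermitian) (z x : Euc n) (c : ℝ) :
    hopfLaxCost T A g z x = g x - (-quadA A⁻¹ x / (2 * T) + ⟪T⁻¹ • toEuclideanLin A⁻¹ z, x⟫ + c)
      + (c + quadA A⁻¹ z / (2 * T)) := by
  rw [hopfLaxCost, sub_eq_add_neg z x, quadA_add hA.inv, real_inner_smul_left, inner_neg_right,
    ← neg_one_smul ℝ x, quadA_smul]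
  ring

theorem exists_isMin_hopfLaxCost (hT : 0 < T) (hA : A.PosDef) (hg : LipschitzWith K g) :
    ∃ R, ∀ x, ∃ y, ‖y - x‖ ≤ R ∧ ∀ w, hopfLaxCost T A g x y ≤ hopfLaxCost T A g x w := by
  obtain ⟨m, hm, hcoer⟩ := exists_mul_norm_sq_le_quadA hA.inv
  -- the quadratic growth of the kernel beats the linear decay allowed to `g`
  have hfar : ∀ x w, 2 * K * T / m < ‖w - x‖ → g x < hopfLaxCost T A g x w := by
    intro x w hw
    have hr : 0 < ‖w - x‖ := lt_of_le_of_lt (by positivity) hw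
    have hlip : g x - K * ‖w - x‖ ≤ g w := by
      have := hg.dist_le_mul w x
      rw [Real.dist_eq, dist_eq_norm] at this
      linarith [neg_abs_le (g w - g x)]
    have hq : m * ‖w - x‖ ^ 2 ≤ quadA A⁻¹ (x - w) := by simpa [norm_sub_rev] using hcoer (x - w)
    rw [div_lt_iff₀ hm] at hw
    have hquad : K * ‖w - x‖ < quadA A⁻¹ (x - w) / (2 * T) := by
      rw [lt_div_iff₀ (by positivity)]
      nlinarith [mul_lt_mul_of_pos_right hw hr]
    rw [hopfLaxCost]
    linarith
  refine ⟨2 * K * T / m, fun x => ?_⟩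
  obtain ⟨y, hy⟩ := ((continuous_hopfLaxCost hg.continuous).uncurry_left x).exists_forall_le' x
    (by
      filter_upwards [(isCompact_closedBall x (2 * K * T / m)).compl_mem_cocompact] with w hw
      rw [hopfLaxCost_self]
      exact (hfar x w (by simpa [dist_eq_norm] using hw)).le)
  refine ⟨y, not_lt.1 fun h => (hfar x y h).not_ge ?_, hy⟩
  simpa [hopfLaxCost_self] using hy x

theorem SplusQ_eq_of_isMin {x y : Euc n} (hy : ∀ w, hopfLaxCost T A g x y ≤ hopfLaxCost T A g x w) :
    SplusQ T A g x = hopfLaxCost T A g x y :=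
  le_antisymm (ciInf_le ⟨_, Set.forall_mem_range.2 hy⟩ y) (le_ciInf hy)

theorem SplusQ_le (hT : 0 < T) (hA : A.PosDef) (hg : LipschitzWith K g) (x w : Euc n) :
    SplusQ T A g x ≤ hopfLaxCost T A g x w := by
  obtain ⟨R, hR⟩ := exists_isMin_hopfLaxCost hT hA hg
  obtain ⟨y, -, hy⟩ := hR x
  exact ciInf_le ⟨_, Set.forall_mem_range.2 hy⟩ w

theorem tendsto_smul_toEuclideanLin_zero {α : Type*} {l : Filter α} (M : Matrix (Fin n) (Fin n) ℝ)
    (c : ℝ) {a : α → Euc n} (ha : Tendsto a l (𝓝 0)) :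
    Tendsto (fun x => c • toEuclideanLin M (a x)) l (𝓝 0) := by
  simpa using (((toEuclideanLin M).continuous_of_finiteDimensional.tendsto 0).comp ha).const_smul c

theorem hasGradientAt_hopfLaxCost (hA : A.IsHermitian) (y z : Euc n) :
    HasGradientAt (fun x => hopfLaxCost T A g x y) (T⁻¹ • toEuclideanLin A⁻¹ (z - y)) z := by
  rw [hasGradientAt_iff_isLittleO]
  have hlim := tendsto_smul_toEuclideanLin_zero (a := fun x => x - z) A⁻¹ (2 * T)⁻¹
    ((continuous_id.sub continuous_const).tendsto' z 0 (sub_self z))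
  refine (isLittleO_inner_of_tendsto_zero hlim).congr_left fun x => ?_
  rw [hopfLaxCost_eq_add hA x z y, real_inner_smul_left, quadA]
  ring

theorem gradient_SplusQ_eq_of_isMin (hT : 0 < T) (hA : A.PosDef) (hg : LipschitzWith K g)
    {y z : Euc n} (hy : ∀ w, hopfLaxCost T A g z y ≤ hopfLaxCost T A g z w)
    (hd : DifferentiableAt ℝ (SplusQ T A g) z) :
    gradient (SplusQ T A g) z = T⁻¹ • toEuclideanLin A⁻¹ (z - y) :=
  (InnerProductSpace.toDual ℝ (Euc n)).injective <|
    hd.hasGradientAt.hasFDerivAt.eq_of_eventuallyLE_of_eq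
      (hasGradientAt_hopfLaxCost hA.isHermitian y z).hasFDerivAt
      (Eventually.of_forall fun x => SplusQ_le hT hA hg x y) (SplusQ_eq_of_isMin hy)

theorem tendsto_of_isMin_hopfLaxCost (hg : Continuous g) {R : ℝ} {y : Euc n → Euc n}
    (hyR : ∀ x, ‖y x - x‖ ≤ R) (hy : ∀ x w, hopfLaxCost T A g x (y x) ≤ hopfLaxCost T A g x w)
    {z x0 : Euc n} (hx0 : ∀ y ≠ x0, hopfLaxCost T A g z x0 < hopfLaxCost T A g z y) :
    Tendsto y (𝓝 z) (𝓝 x0) := by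
  refine tendsto_nhds_of_isMin_of_unique (continuous_hopfLaxCost hg) hy
    (isCompact_closedBall z (R + 1)) ?_
    fun c hc => by_contra fun hne => (hx0 c hne).not_ge (hc x0)
  filter_upwards [Metric.closedBall_mem_nhds z one_pos] with x hx
  rw [Metric.mem_closedBall, dist_eq_norm] at hx ⊢
  calc ‖y x - z‖ = ‖(y x - x) + (x - z)‖ := by rw [sub_add_sub_cancel]
    _ ≤ R + 1 := (norm_add_le _ _).trans (add_le_add (hyR x) hx)

theorem hasGradientAt_SplusQ_of_isStrictMin (hT : 0 < T) (hA : A.PosDef) (hg : LipschitzWith K g)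
    {z x0 : Euc n} (hx0 : ∀ y ≠ x0, hopfLaxCost T A g z x0 < hopfLaxCost T A g z y) :
    HasGradientAt (SplusQ T A g) (T⁻¹ • toEuclideanLin A⁻¹ (z - x0)) z := by
  have hmin : ∀ w, hopfLaxCost T A g z x0 ≤ hopfLaxCost T A g z w := fun w => by
    rcases eq_or_ne w x0 with rfl | hw
    · rfl
    · exact (hx0 w hw).le
  obtain ⟨R, hR⟩ := exists_isMin_hopfLaxCost hT hA hg
  choose y hyR hy using hR
  have hy_tendsto := tendsto_of_isMin_hopfLaxCost hg.continuous hyR hy hx0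
  have hSz : SplusQ T A g z = hopfLaxCost T A g z x0 := SplusQ_eq_of_isMin hmin
  rw [hasGradientAt_iff_isLittleO]
  -- the error is squeezed between the kernels centred at the minimizers `y x` and `x0`
  refine IsLittleO.of_le_of_le
    (isLittleO_inner_of_tendsto_zero (tendsto_smul_toEuclideanLin_zero (a := fun x => x0 - y x)
      A⁻¹ T⁻¹ (by simpa using (tendsto_const_nhds (x := x0)).sub hy_tendsto)))
    (isLittleO_inner_of_tendsto_zero (tendsto_smul_toEuclideanLin_zero (a := fun x => x - z)
      A⁻¹ (2 * T)⁻¹ ((continuous_id.sub continuous_const).tendsto' z 0 (sub_self z))))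
    (Eventually.of_forall fun x => ?_) (Eventually.of_forall fun x => ?_)
  · have hquad : 0 ≤ quadA A⁻¹ (x - z) / (2 * T) := by
      have := quadA_nonneg hA.inv (x - z); positivity
    have hinner : ⟪T⁻¹ • toEuclideanLin A⁻¹ (x0 - y x), x - z⟫ =
        ⟪T⁻¹ • toEuclideanLin A⁻¹ (z - y x), x - z⟫
          - ⟪T⁻¹ • toEuclideanLin A⁻¹ (z - x0), x - z⟫ := by
      rw [← inner_sub_left, ← smul_sub, ← map_sub, sub_sub_sub_cancel_left]
    rw [SplusQ_eq_of_isMin (hy x), hopfLaxCost_eq_add hA.isHermitian x z (y x), hinner]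
    linarith [hmin (y x), hy x]
  · have hle := SplusQ_le hT hA hg x x0
    rw [hopfLaxCost_eq_add hA.isHermitian x z x0] at hle
    rw [hSz, real_inner_smul_left _ _ (2 * T)⁻¹, inv_mul_eq_div]
    have hquad : quadA A⁻¹ (x - z) / (2 * T) = ⟪toEuclideanLin A⁻¹ (x - z), x - z⟫ / (2 * T) := rfl
    linarith

theorem mem_XTQ_SplusQ_iff (hT : 0 < T) (hA : A.PosDef) (hg : LipschitzWith K g)
    {x0 : Euc n} :
    x0 ∈ XTQ T A (SplusQ T A g) ↔
      ∃ z, ∀ y ≠ x0, hopfLaxCost T A g z x0 < hopfLaxCost T A g z y := by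
  have hcancel : ∀ z y : Euc n, z - T • toEuclideanLin A (T⁻¹ • toEuclideanLin A⁻¹ (z - y)) = y :=
    fun z y => by
      rw [map_smul, toEuclideanLin_apply_inv_apply hA.isUnit, smul_smul, mul_inv_cancel₀ hT.ne',
        one_smul, sub_sub_cancel]
  constructor
  · rintro ⟨z, hd, rfl⟩
    have hunique : ∀ y, (∀ w, hopfLaxCost T A g z y ≤ hopfLaxCost T A g z w) →
        y = z - T • toEuclideanLin A (gradient (SplusQ T A g) z) := fun y hy => by
      rw [gradient_SplusQ_eq_of_isMin hT hA hg hy hd, hcancel]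
    obtain ⟨R, hR⟩ := exists_isMin_hopfLaxCost hT hA hg
    obtain ⟨y, -, hy⟩ := hR z
    refine ⟨z, fun w hw => ?_⟩
    rw [← hunique y hy]
    exact (hy w).lt_of_ne fun heq => hw (hunique w fun v => heq ▸ hy v)
  · rintro ⟨z, hz⟩
    have hgrad := hasGradientAt_SplusQ_of_isStrictMin hT hA hg hz
    exact ⟨z, hgrad.differentiableAt, by rw [hgrad.gradient, hcancel]⟩

theorem exists_isStrictMin_hopfLaxCost_iff (hT : T ≠ 0) (hA : A.IsHermitian) (hdet : IsUnit A)
    {x0 : Euc n} :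
    (∃ z, ∀ y ≠ x0, hopfLaxCost T A g z x0 < hopfLaxCost T A g z y) ↔
      ∃ (b : Euc n) (c : ℝ),
        g x0 = -quadA A⁻¹ x0 / (2 * T) + ⟪b, x0⟫ + c ∧
        ∀ x : Euc n, x ≠ x0 → -quadA A⁻¹ x / (2 * T) + ⟪b, x⟫ + c < g x := by
  constructor
  · rintro ⟨z, hz⟩
    set c := hopfLaxCost T A g z x0 - quadA A⁻¹ z / (2 * T)
    have hcost := fun x => hopfLaxCost_eq_sub_paraboloid (T := T) (g := g) hA z x c
    refine ⟨T⁻¹ • toEuclideanLin A⁻¹ z, c, by linarith [hcost x0], fun x hx => ?_⟩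
    linarith [hcost x0, hcost x, hz x hx]
  · rintro ⟨b, c, hx0, hlt⟩
    have hb : T⁻¹ • toEuclideanLin A⁻¹ (T • toEuclideanLin A b) = b := by
      rw [map_smul, toEuclideanLin_inv_apply_apply hdet, smul_smul, inv_mul_cancel₀ hT, one_smul]
    have hcost := fun x =>
      hopfLaxCost_eq_sub_paraboloid (T := T) (g := g) hA (T • toEuclideanLin A b) x c
    simp only [hb] at hcost
    exact ⟨T • toEuclideanLin A b, fun x hx => by linarith [hcost x0, hcost x, hlt x hx]⟩

end HopfLax

theorem XT_paraboloid_characterization_general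
    {n : ℕ} (T : ℝ) (hT : 0 < T)
    (A : Matrix (Fin n) (Fin n) ℝ) (hA : A.PosDef)
    (uT : Euc n → ℝ)
    (u0 : Euc n → ℝ) (hu0 : IsLip u0) (hu0mem : SplusQ T A u0 = uT)
    (x0 : Euc n) :
    x0 ∈ XTQ T A uT ↔
      ∃ (b : Euc n) (c : ℝ),
        u0 x0 = -quadA A⁻¹ x0 / (2 * T) + ⟪b, x0⟫ + c ∧
        ∀ x : Euc n, x ≠ x0 → -quadA A⁻¹ x / (2 * T) + ⟪b, x⟫ + c < u0 x := by
  obtain ⟨K, hK⟩ := hu0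
  subst hu0mem
  rw [mem_XTQ_SplusQ_iff hT hA hK]
  exact exists_isStrictMin_hopfLaxCost_iff hT.ne' hA.isHermitian hA.isUnit

/-- For `u0 ∈ I_T(u_T)`, a point `x0` belongs to `X_T(u_T)` iff there is a
paraboloid `x ↦ -⟨A⁻¹x, x⟩/(2T) + ⟨b, x⟩ + c` touching `u0` from below exactly at `x0`. -/
theorem XT_paraboloid_characterization
    {n : ℕ} (hn : 0 < n) (T : ℝ) (hT : 0 < T)
    (A : Matrix (Fin n) (Fin n) ℝ) (hA : A.PosDef)
    (uT : Euc n → ℝ) (huT : IsLip uT)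
    (hreach : ∃ u0 : Euc n → ℝ, IsLip u0 ∧ SplusQ T A u0 = uT)
    (u0 : Euc n → ℝ) (hu0 : IsLip u0) (hu0mem : SplusQ T A u0 = uT)
    (x0 : Euc n) :
    x0 ∈ XTQ T A uT ↔
      ∃ (b : Euc n) (c : ℝ),
        u0 x0 = -quadA A⁻¹ x0 / (2 * T) + ⟪b, x0⟫ + c ∧
        ∀ x : Euc n, x ≠ x0 → -quadA A⁻¹ x / (2 * T) + ⟪b, x⟫ + c < u0 x :=
  XT_paraboloid_characterization_general T hT A hA uT u0 hu0 hu0mem x0
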